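/- Let h : U → ℂ be a smooth function on a domain U ⊂ ℂ and suppose θ : U → ℝ is smooth and satisfies θ_z̄ = −i h (1 − e^{iθ}) and θ_z = i conj(h) (1 − e^{−iθ}). Then θ_{z̄ z} = −A (1 − e^{iθ}) where A = i(h_z − |h|²), and consequently A e^{2iθ} − 2i Im(A) e^{iθ} − conj(A) = 0 on U. -/

import Mathlib

open Complex


/-- The Wirtinger operator `∂_z f = (f_x − i f_y)/2`. -/
noncomputable def wdz (f : ℂ → ℂ) (z : ℂ) : ℂ :=
  (fderiv ℝ f z 1 - Complex.I * fderiv ℝ f z Complex.I) / 2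

/-- The Wirtinger operator `∂_z̄ f = (f_x + i f_y)/2`. -/
noncomputable def wdzbar (f : ℂ → ℂ) (z : ℂ) : ℂ :=
  (fderiv ℝ f z 1 + Complex.I * fderiv ℝ f z Complex.I) / 2

/-- The coefficient `A = i(h_z − |h|²)`. -/
noncomputable def Acoef (h : ℂ → ℂ) (z : ℂ) : ℂ :=
  Complex.I * (wdz h z - (Complex.normSq (h z) : ℂ))

section helpers
variable {f g : ℂ → ℂ} {z : ℂ}

lemma wdz_congr_nhds (h : f =ᶠ[nhds z] g) : wdz f z = wdz g z := by
  unfold wdz; rw [h.fderiv_eq]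

lemma wdzbar_congr_nhds (h : f =ᶠ[nhds z] g) : wdzbar f z = wdzbar g z := by
  unfold wdzbar; rw [h.fderiv_eq]

lemma wdz_const_mul (hf : DifferentiableAt ℝ f z) (c : ℂ) :
    wdz (fun w => c * f w) z = c * wdz f z := by
  unfold wdz; rw [fderiv_const_mul hf]; simp; ring

lemma wdzbar_const_mul (hf : DifferentiableAt ℝ f z) (c : ℂ) :
    wdzbar (fun w => c * f w) z = c * wdzbar f z := by
  unfold wdzbar; rw [fderiv_const_mul hf]; simp; ring

lemma wdz_mul (hf : DifferentiableAt ℝ f z) (hg : DifferentiableAt ℝ g z) :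
    wdz (fun w => f w * g w) z = wdz f z * g z + f z * wdz g z := by
  unfold wdz; rw [fderiv_fun_mul hf hg]; simp; ring

lemma wdzbar_mul (hf : DifferentiableAt ℝ f z) (hg : DifferentiableAt ℝ g z) :
    wdzbar (fun w => f w * g w) z = wdzbar f z * g z + f z * wdzbar g z := by
  unfold wdzbar; rw [fderiv_fun_mul hf hg]; simp; ring

lemma wdz_of_hasFDerivAt {f' : ℂ →L[ℝ] ℂ} (h : HasFDerivAt f f' z) :
    wdz f z = (f' 1 - Complex.I * f' Complex.I) / 2 := by
  unfold wdz; rw [h.fderiv]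

lemma wdzbar_of_hasFDerivAt {f' : ℂ →L[ℝ] ℂ} (h : HasFDerivAt f f' z) :
    wdzbar f z = (f' 1 + Complex.I * f' Complex.I) / 2 := by
  unfold wdzbar; rw [h.fderiv]

lemma wdz_const_sub (hf : DifferentiableAt ℝ f z) (c : ℂ) :
    wdz (fun w => c - f w) z = -wdz f z := by
  unfold wdz; rw [(show HasFDerivAt (fun w => c - f w) (0 - fderiv ℝ f z) z from (hasFDerivAt_const c z).sub hf.hasFDerivAt).fderiv]; simp; ring

lemma wdzbar_const_sub (hf : DifferentiableAt ℝ f z) (c : ℂ) :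
    wdzbar (fun w => c - f w) z = -wdzbar f z := by
  unfold wdzbar; rw [(show HasFDerivAt (fun w => c - f w) (0 - fderiv ℝ f z) z from (hasFDerivAt_const c z).sub hf.hasFDerivAt).fderiv]; simp; ring

lemma wdz_cexp (hf : DifferentiableAt ℝ f z) :
    wdz (fun w => Complex.exp (f w)) z = Complex.exp (f z) * wdz f z := by
  unfold wdz; rw [hf.hasFDerivAt.cexp.fderiv]; simp; ring

lemma wdzbar_cexp (hf : DifferentiableAt ℝ f z) :
    wdzbar (fun w => Complex.exp (f w)) z = Complex.exp (f z) * wdzbar f z := by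
  unfold wdzbar; rw [hf.hasFDerivAt.cexp.fderiv]; simp; ring

lemma wdzbar_conj (hf : DifferentiableAt ℝ f z) :
    wdzbar (fun w => (starRingEnd ℂ) (f w)) z = (starRingEnd ℂ) (wdz f z) := by
  have h : HasFDerivAt (fun w => (starRingEnd ℂ) (f w))
      ((Complex.conjCLE : ℂ →L[ℝ] ℂ).comp (fderiv ℝ f z)) z := by
    exact (Complex.conjCLE.hasFDerivAt).comp z hf.hasFDerivAt
  unfold wdzbar wdz
  rw [h.fderiv]
  simp [map_div₀, Complex.conj_I, map_ofNat]

lemma wdz_wdzbar_comm (hf : ContDiffAt ℝ 2 f z) :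
    wdz (fun w => wdzbar f w) z = wdzbar (fun w => wdz f w) z := by
  have hd : DifferentiableAt ℝ (fderiv ℝ f) z :=
    (hf.fderiv_right (m := 1) (by norm_num)).differentiableAt (by norm_num)
  have hsymm : IsSymmSndFDerivAt ℝ f z := hf.isSymmSndFDerivAt (by simp)
  set f'' := fderiv ℝ (fderiv ℝ f) z with hf''
  have hF : HasFDerivAt (fderiv ℝ f) f'' z := hd.hasFDerivAt
  have h1 : ∀ v : ℂ, HasFDerivAt (fun w => fderiv ℝ f w v) (f''.flip v) z := by
    intro v
    have := hF.clm_apply (hasFDerivAt_const v z)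
    simpa using this
  have hzb : HasFDerivAt (fun w => wdzbar f w)
      ((2:ℝ)⁻¹ • (f''.flip 1 + Complex.I • f''.flip Complex.I)) z := by
    have := (((h1 1).add ((h1 Complex.I).const_mul Complex.I))).const_smul (2:ℝ)⁻¹
    convert this using 2 with w
    · rfl
    · rfl
    · unfold wdzbar
      simp [smul_eq_mul]
      ring
  have hzd : HasFDerivAt (fun w => wdz f w)
      ((2:ℝ)⁻¹ • (f''.flip 1 - Complex.I • f''.flip Complex.I)) z := by
    have := (((h1 1).sub ((h1 Complex.I).const_mul Complex.I))).const_smul (2:ℝ)⁻¹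
    convert this using 2 with w
    · rfl
    · rfl
    · unfold wdz
      simp [smul_eq_mul]
      ring
  rw [wdz_of_hasFDerivAt hzb, wdzbar_of_hasFDerivAt hzd]
  simp only [ContinuousLinearMap.smul_apply, ContinuousLinearMap.add_apply,
    ContinuousLinearMap.sub_apply, ContinuousLinearMap.flip_apply,
    ContinuousLinearMap.coe_smul', Pi.smul_apply, smul_eq_mul, Complex.real_smul,
    Complex.ofReal_inv, Complex.ofReal_ofNat]
  linear_combination (Complex.I / 2) * (hsymm 1 Complex.I)

end helpers

/-- Let `h : U → ℂ` be smooth on a domain `U ⊆ ℂ` and `θ : U → ℝ` smooth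
with `θ_z̄ = −i h (1 − e^{iθ})` and `θ_z = i conj(h) (1 − e^{−iθ})`.  Then
`θ_{z̄ z} = −A (1 − e^{iθ})` where `A = i(h_z − |h|²)`, and consequently
`A e^{2iθ} − 2i Im(A) e^{iθ} − conj(A) = 0` on `U`. -/
theorem stmt_15 (U : Set ℂ) (hU : IsOpen U) (h : ℂ → ℂ) (θ : ℂ → ℝ)
    (hh : ContDiffOn ℝ (⊤ : ℕ∞) h U)
    (hθ : ContDiffOn ℝ (⊤ : ℕ∞) (fun z => (θ z : ℂ)) U)
    (heq1 : ∀ z ∈ U, wdzbar (fun w => (θ w : ℂ)) z =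
      -Complex.I * h z * (1 - Complex.exp (Complex.I * (θ z : ℂ))))
    (heq2 : ∀ z ∈ U, wdz (fun w => (θ w : ℂ)) z =
      Complex.I * (starRingEnd ℂ) (h z) * (1 - Complex.exp (-Complex.I * (θ z : ℂ)))) :
    (∀ z ∈ U, wdz (fun w => wdzbar (fun x => (θ x : ℂ)) w) z =
      -(Acoef h z) * (1 - Complex.exp (Complex.I * (θ z : ℂ)))) ∧
    (∀ z ∈ U, Acoef h z * Complex.exp (2 * Complex.I * (θ z : ℂ))
      - 2 * Complex.I * ((Acoef h z).im : ℂ) * Complex.exp (Complex.I * (θ z : ℂ))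
      - (starRingEnd ℂ) (Acoef h z) = 0) := by
  have key1 : ∀ z ∈ U, wdz (fun w => wdzbar (fun x => (θ x : ℂ)) w) z =
      -(Acoef h z) * (1 - Complex.exp (Complex.I * (θ z : ℂ))) := by
    intro z hz
    have hmem : U ∈ nhds z := hU.mem_nhds hz
    have hθz : ContDiffAt ℝ (⊤ : ℕ∞) (fun w => (θ w : ℂ)) z := hθ.contDiffAt hmem
    have dθ : DifferentiableAt ℝ (fun w => (θ w : ℂ)) z := hθz.differentiableAt (by simp)
    have dh : DifferentiableAt ℝ h z := (hh.contDiffAt hmem).differentiableAt (by simp)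
    have dE : DifferentiableAt ℝ (fun w => Complex.exp (Complex.I * (θ w : ℂ))) z :=
      (dθ.const_mul Complex.I).cexp
    rw [wdz_congr_nhds (Filter.eventuallyEq_of_mem hmem (fun w hw => heq1 w hw))]
    rw [show (fun w => -Complex.I * h w * (1 - Complex.exp (Complex.I * (θ w : ℂ)))) =
        (fun w => -Complex.I * (h w * (1 - Complex.exp (Complex.I * (θ w : ℂ))))) from by
      funext w; ring]
    rw [wdz_const_mul (dh.fun_mul (dE.const_sub 1)) (-Complex.I), wdz_mul dh (dE.const_sub 1),
      wdz_const_sub dE 1, wdz_cexp (dθ.const_mul Complex.I), wdz_const_mul dθ Complex.I,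
      heq2 z hz]
    have hexp : Complex.exp (Complex.I * (θ z : ℂ)) * Complex.exp (-Complex.I * (θ z : ℂ)) = 1 := by
      rw [← Complex.exp_add, show Complex.I * (θ z : ℂ) + -Complex.I * (θ z : ℂ) = 0 from by ring,
        Complex.exp_zero]
    have hns : ((Complex.normSq (h z) : ℝ) : ℂ) = (starRingEnd ℂ) (h z) * h z :=
      Complex.normSq_eq_conj_mul_self
    unfold Acoef
    rw [hns]
    linear_combination Complex.I * (starRingEnd ℂ) (h z) * h z * hexp
      + Complex.I * Complex.exp (Complex.I * (θ z : ℂ)) * h z * (starRingEnd ℂ) (h z)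
        * (1 - Complex.exp (-Complex.I * (θ z : ℂ))) * Complex.I_sq
  refine ⟨key1, ?_⟩
  intro z hz
  have hmem : U ∈ nhds z := hU.mem_nhds hz
  have hθz : ContDiffAt ℝ (⊤ : ℕ∞) (fun w => (θ w : ℂ)) z := hθ.contDiffAt hmem
  have dθ : DifferentiableAt ℝ (fun w => (θ w : ℂ)) z := hθz.differentiableAt (by simp)
  have dh : DifferentiableAt ℝ h z := (hh.contDiffAt hmem).differentiableAt (by simp)
  have dch : DifferentiableAt ℝ (fun w => (starRingEnd ℂ) (h w)) z :=
    Complex.conjCLE.differentiableAt.comp z dh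
  have dE' : DifferentiableAt ℝ (fun w => Complex.exp (-Complex.I * (θ w : ℂ))) z :=
    (dθ.const_mul (-Complex.I)).cexp
  have key2 : wdzbar (fun w => wdz (fun x => (θ x : ℂ)) w) z =
      -((starRingEnd ℂ) (Acoef h z)) * (1 - Complex.exp (-Complex.I * (θ z : ℂ))) := by
    rw [wdzbar_congr_nhds (Filter.eventuallyEq_of_mem hmem (fun w hw => heq2 w hw))]
    rw [show (fun w => Complex.I * (starRingEnd ℂ) (h w) *
          (1 - Complex.exp (-Complex.I * (θ w : ℂ)))) =
        (fun w => Complex.I * ((starRingEnd ℂ) (h w) *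
          (1 - Complex.exp (-Complex.I * (θ w : ℂ))))) from by funext w; ring]
    rw [wdzbar_const_mul (dch.fun_mul (dE'.const_sub 1)) Complex.I, wdzbar_mul dch (dE'.const_sub 1),
      wdzbar_conj dh, wdzbar_const_sub dE' 1, wdzbar_cexp (dθ.const_mul (-Complex.I)),
      wdzbar_const_mul dθ (-Complex.I), heq1 z hz]
    have hexp : Complex.exp (Complex.I * (θ z : ℂ)) * Complex.exp (-Complex.I * (θ z : ℂ)) = 1 := by
      rw [← Complex.exp_add, show Complex.I * (θ z : ℂ) + -Complex.I * (θ z : ℂ) = 0 from by ring,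
        Complex.exp_zero]
    have hA : (starRingEnd ℂ) (Acoef h z)
        = -Complex.I * ((starRingEnd ℂ) (wdz h z) - ((Complex.normSq (h z) : ℝ) : ℂ)) := by
      simp only [Acoef, map_mul, map_sub, Complex.conj_I, Complex.conj_ofReal]
    have hns : ((Complex.normSq (h z) : ℝ) : ℂ) = (starRingEnd ℂ) (h z) * h z :=
      Complex.normSq_eq_conj_mul_self
    rw [hA, hns]
    linear_combination -Complex.I * (starRingEnd ℂ) (h z) * h z * hexp
      - Complex.I * Complex.exp (-Complex.I * (θ z : ℂ)) * (starRingEnd ℂ) (h z) * h z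
        * (1 - Complex.exp (Complex.I * (θ z : ℂ))) * Complex.I_sq
  have hcomm : -(Acoef h z) * (1 - Complex.exp (Complex.I * (θ z : ℂ)))
      = -((starRingEnd ℂ) (Acoef h z)) * (1 - Complex.exp (-Complex.I * (θ z : ℂ))) := by
    rw [← key1 z hz, ← key2]
    exact wdz_wdzbar_comm (hθz.of_le (by rw [← WithTop.coe_ofNat]; exact WithTop.coe_le_coe.mpr le_top))
  have hexp : Complex.exp (Complex.I * (θ z : ℂ)) * Complex.exp (-Complex.I * (θ z : ℂ)) = 1 := by
    rw [← Complex.exp_add, show Complex.I * (θ z : ℂ) + -Complex.I * (θ z : ℂ) = 0 from by ring,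
      Complex.exp_zero]
  have he2 : Complex.exp (2 * Complex.I * (θ z : ℂ))
      = Complex.exp (Complex.I * (θ z : ℂ)) * Complex.exp (Complex.I * (θ z : ℂ)) := by
    rw [← Complex.exp_add]; congr 1; ring
  have hIm : 2 * Complex.I * ((Acoef h z).im : ℂ)
      = Acoef h z - (starRingEnd ℂ) (Acoef h z) := by
    rw [Complex.sub_conj]; push_cast; ring
  linear_combination Acoef h z * he2 - Complex.exp (Complex.I * (θ z : ℂ)) * hIm
    + Complex.exp (Complex.I * (θ z : ℂ)) * hcomm + (starRingEnd ℂ) (Acoef h z) * hexp
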